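/- There is no smooth Nijenhuis operator L on an open neighborhood U of 0 ∈ ℝ³ with characteristic polynomial coefficients σ₁, σ₂, σ₃ such that: dσ₂ and dσ₃ are linearly independent at every point of U; σ₂(0) = σ₃(0) = 0; σ₁(0) = 0; and σ₁ has a Morse singularity at 0 on the level line {σ₂ = σ₃ = 0}. -/

import Mathlib

open Matrix Set

noncomputable section

/-- Points of ℝ³, identified with `Fin 3 → ℝ`. -/
abbrev E3 := Fin 3 → ℝ

/-- Lie bracket of vector fields on ℝ³: `[X,Y](p) = DY(p)(X(p)) − DX(p)(Y(p))`. -/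
def VBracket (X Y : E3 → E3) : E3 → E3 :=
  fun p => fderiv ℝ Y p (X p) - fderiv ℝ X p (Y p)

/-- `L` is a Nijenhuis operator on `U`: the Nijenhuis torsion vanishes on
constant vector fields at every point of `U`. -/
def IsNijenhuisOn (L : E3 → (E3 →L[ℝ] E3)) (U : Set E3) : Prop :=
  ∀ u v : E3, ∀ p ∈ U,
    VBracket (fun q => L q u) (fun q => L q v) p
      - L p (VBracket (fun q => L q u) (fun _ => v) p)
      - L p (VBracket (fun _ => u) (fun q => L q v) p) = 0

/-- Matrix of the operator `L p` in the standard basis. -/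
def opMatrix (L : E3 → (E3 →L[ℝ] E3)) (p : E3) : Matrix (Fin 3) (Fin 3) ℝ :=
  LinearMap.toMatrix' (↑(L p) : E3 →ₗ[ℝ] E3)

/-- `σ1, σ2, σ3` are the coefficients of the characteristic polynomial of `L` on `U`:
`det (t·Id − L(p)) = t³ + σ₁(p) t² + σ₂(p) t + σ₃(p)`. -/
def CharCoeffsOn (L : E3 → (E3 →L[ℝ] E3)) (U : Set E3) (σ1 σ2 σ3 : E3 → ℝ) : Prop :=
  ∀ p ∈ U, ∀ t : ℝ,
    (t • (1 : Matrix (Fin 3) (Fin 3) ℝ) - opMatrix L p).det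
      = t ^ 3 + σ1 p * t ^ 2 + σ2 p * t + σ3 p

/-- `h` has a Morse singularity at `0` on the level line `{σi = σj = 0}`:
for every smooth curve `γ : (−δ, δ) → U` with `γ(0) = 0`, `γ'(0) ≠ 0` lying in the
joint zero-level of `σi, σj`, one has `(h∘γ)'(0) = 0` and `(h∘γ)''(0) ≠ 0`. -/
def MorseOnLevel (U : Set E3) (σi σj h : E3 → ℝ) : Prop :=
  ∀ δ : ℝ, 0 < δ → ∀ γ : ℝ → E3,
    ContDiffOn ℝ (⊤ : ℕ∞) γ (Ioo (-δ) δ) → γ 0 = 0 → deriv γ 0 ≠ 0 →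
    (∀ t ∈ Ioo (-δ) δ, γ t ∈ U ∧ σi (γ t) = 0 ∧ σj (γ t) = 0) →
    deriv (h ∘ γ) 0 = 0 ∧ deriv (deriv (h ∘ γ)) 0 ≠ 0

set_option maxHeartbeats 2000000

private lemma det_expand3 (X : Matrix (Fin 3) (Fin 3) ℝ) (t : ℝ) :
    (t • (1 : Matrix (Fin 3) (Fin 3) ℝ) - X).det
      = t^3 - X.trace * t^2 + ((X.trace^2 - (X*X).trace)/2) * t - X.det := by
  simp [Matrix.det_fin_three, Matrix.trace_fin_three, Matrix.mul_apply,
    Fin.sum_univ_three, Matrix.smul_apply, Matrix.one_apply, Matrix.sub_apply]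
  ring

private lemma cayley3 (X : Matrix (Fin 3) (Fin 3) ℝ) :
    X * X * X = X.trace • (X*X) - (((X.trace)^2 - (X*X).trace)/2) • X
      + X.det • (1 : Matrix (Fin 3) (Fin 3) ℝ) := by
  ext i j
  fin_cases i <;> fin_cases j <;>
    (simp [Matrix.mul_apply, Fin.sum_univ_three, Matrix.trace_fin_three,
      Matrix.det_fin_three, Matrix.smul_apply, Matrix.one_apply]; ring)


/-- **Theorem (σ₁ Morse on `{σ₂ = σ₃ = 0}` with `σ₁(0) = 0`: nonexistence).** -/

theorem sigma1_morse_nonexistence :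
    ¬ ∃ (U : Set E3) (L : E3 → (E3 →L[ℝ] E3)) (σ1 σ2 σ3 : E3 → ℝ),
      IsOpen U ∧ (0 : E3) ∈ U ∧
      ContDiffOn ℝ (⊤ : ℕ∞) L U ∧ IsNijenhuisOn L U ∧
      CharCoeffsOn L U σ1 σ2 σ3 ∧
      (∀ q ∈ U, LinearIndependent ℝ ![fderiv ℝ σ2 q, fderiv ℝ σ3 q]) ∧
      σ2 0 = 0 ∧ σ3 0 = 0 ∧ σ1 0 = 0 ∧
      MorseOnLevel U σ2 σ3 σ1 := by
  rintro ⟨U, L, σ1, σ2, σ3, hU, hU0, hL, hNij, hChar, hInd, hσ20, hσ30, hσ10, hMorse⟩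
  have hUn : U ∈ nhds 0 := hU.mem_nhds hU0
  have hLat : ContDiffAt ℝ (⊤ : ℕ∞) L 0 := hL.contDiffAt hUn
  have hDiffL : DifferentiableAt ℝ L 0 := hLat.differentiableAt (by simp)
  set Dm := fderiv ℝ L 0 with hDm
  set M0 := opMatrix L 0 with hM0
  -- characteristic coefficients as explicit matrix functions
  have hs1 : ∀ p ∈ U, σ1 p = -(opMatrix L p).trace := by
    intro p hp
    have h1 := hChar p hp 1
    have h2 := hChar p hp (-1)
    have h0 := hChar p hp 0
    rw [det_expand3] at h1 h2 h0
    linarith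
  have hs2 : ∀ p ∈ U, σ2 p
      = (((opMatrix L p).trace)^2 - (opMatrix L p * opMatrix L p).trace)/2 := by
    intro p hp
    have h1 := hChar p hp 1
    have h2 := hChar p hp (-1)
    have h0 := hChar p hp 0
    rw [det_expand3] at h1 h2 h0
    linarith
  have hs3 : ∀ p ∈ U, σ3 p = -(opMatrix L p).det := by
    intro p hp
    have h0 := hChar p hp 0
    rw [det_expand3] at h0
    linarith
  -- the matrix of L at the origin is nilpotent
  have htr0 : M0.trace = 0 := by
    have := hs1 0 hU0; rw [hσ10] at this; rw [hM0]; linarith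
  have htr20 : (M0 * M0).trace = 0 := by
    have := hs2 0 hU0; rw [hσ20] at this; rw [hM0]
    rw [← hM0] at this; nlinarith [htr0]
  have hdet0 : M0.det = 0 := by
    have := hs3 0 hU0; rw [hσ30] at this; rw [hM0]; linarith
  have hM03 : M0 * M0 * M0 = 0 := by
    rw [cayley3 M0, htr0, htr20, hdet0]
    simp
  -- torsion identity machinery
  have hLv : ∀ v : E3, fderiv ℝ (fun q => L q v) 0 = Dm.flip v := by
    intro v
    rw [show (fun q => L q v) = (fun q => (L q) ((fun _ => v) q)) from rfl,
      fderiv_clm_apply hDiffL (differentiableAt_const v)]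
    simp [hDm]
  have hTor : ∀ u v : E3,
      Dm (L 0 u) v - Dm (L 0 v) u + L 0 (Dm v u) - L 0 (Dm u v) = 0 := by
    intro u v
    have h := hNij u v 0 hU0
    simp only [VBracket, hLv, fderiv_const, Pi.zero_apply,
      ContinuousLinearMap.zero_apply, ContinuousLinearMap.flip_apply,
      zero_sub, sub_zero, map_sub, map_neg] at h
    simpa [sub_neg_eq_add] using h
  have hOp : ∀ u : E3,
      (Dm (L 0 u)) - (Dm.flip u).comp (L 0) + (L 0).comp (Dm.flip u)
        - (L 0).comp (Dm u) = 0 := by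
    intro u
    ext v i
    simpa using congrFun (hTor u v) i
  set N : E3 → Matrix (Fin 3) (Fin 3) ℝ :=
    fun w => LinearMap.toMatrix' ((Dm w : E3 →L[ℝ] E3) : E3 →ₗ[ℝ] E3) with hN
  have hMat : ∀ u : E3,
      N (L 0 u)
        - LinearMap.toMatrix' ((Dm.flip u : E3 →L[ℝ] E3) : E3 →ₗ[ℝ] E3) * M0
        + M0 * LinearMap.toMatrix' ((Dm.flip u : E3 →L[ℝ] E3) : E3 →ₗ[ℝ] E3)
        - M0 * N u = 0 := by
    intro u
    have h := congrArg (fun T : E3 →L[ℝ] E3 =>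
      LinearMap.toMatrix' (T : E3 →ₗ[ℝ] E3)) (hOp u)
    simpa [ContinuousLinearMap.coe_sub, ContinuousLinearMap.coe_add,
      ContinuousLinearMap.coe_comp, map_sub, map_add,
      LinearMap.toMatrix'_comp, opMatrix, hN, hM0] using h
  have hTrId : ∀ (C : Matrix (Fin 3) (Fin 3) ℝ), C * M0 = M0 * C → ∀ u : E3,
      (C * N (L 0 u)).trace = (C * (M0 * N u)).trace := by
    intro C hC u
    set Q := LinearMap.toMatrix' ((Dm.flip u : E3 →L[ℝ] E3) : E3 →ₗ[ℝ] E3) with hQ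
    have h := congrArg (fun X => (C * X).trace) (hMat u)
    simp only [Matrix.mul_sub, Matrix.mul_add, Matrix.trace_sub, Matrix.trace_add,
      Matrix.mul_zero, Matrix.trace_zero] at h
    have e1 : (C * (Q * M0)).trace = (C * (M0 * Q)).trace := by
      rw [← Matrix.mul_assoc, Matrix.trace_mul_comm, ← Matrix.mul_assoc, ← hC,
        Matrix.mul_assoc, Matrix.trace_mul_comm C (M0 * Q)]
    linarith [h, e1]
  -- entry functions and their derivatives
  set e : Fin 3 → E3 := fun j => (fun j' => if j' = j then 1 else 0) with he
  have hmapply : ∀ (p : E3) (i j : Fin 3), opMatrix L p i j = L p (e j) i := by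
    intro p i j; rw [opMatrix, LinearMap.toMatrix'_apply, show e j = Pi.single j 1 from by ext j'; simp [he, Pi.single_apply]]; rfl
  have hNapply : ∀ (w : E3) (i j : Fin 3), Dm w (e j) i = N w i j := by
    intro w i j
    show Dm w (e j) i = LinearMap.toMatrix' ((Dm w : E3 →L[ℝ] E3) : E3 →ₗ[ℝ] E3) i j
    rw [LinearMap.toMatrix'_apply, show e j = Pi.single j 1 from by ext j'; simp [he, Pi.single_apply]]; rfl
  have hmD : ∀ i j : Fin 3, HasFDerivAt (fun p => opMatrix L p i j)
      (((ContinuousLinearMap.proj (R := ℝ) (φ := fun _ : Fin 3 => ℝ) i).comp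
        (ContinuousLinearMap.apply ℝ E3 (e j))).comp Dm) 0 := by
    intro i j
    have h := (((ContinuousLinearMap.proj (R := ℝ) (φ := fun _ : Fin 3 => ℝ) i).comp
        (ContinuousLinearMap.apply ℝ E3 (e j)))).hasFDerivAt.comp 0 hDiffL.hasFDerivAt
    exact h.congr_of_eventuallyEq (Filter.Eventually.of_forall fun p => (hmapply p i j))
  have hmDval : ∀ (i j : Fin 3) (w : E3),
      (((ContinuousLinearMap.proj (R := ℝ) (φ := fun _ : Fin 3 => ℝ) i).comp
        (ContinuousLinearMap.apply ℝ E3 (e j))).comp Dm) w = N w i j := by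
    intro i j w
    simp [ContinuousLinearMap.comp_apply, ContinuousLinearMap.proj_apply,
      ContinuousLinearMap.apply_apply, hNapply]
  -- derivative of σ1
  have hEq1 : σ1 =ᶠ[nhds 0] (fun p =>
      -(opMatrix L p 0 0 + opMatrix L p 1 1 + opMatrix L p 2 2)) := by
    filter_upwards [hUn] with p hp
    rw [hs1 p hp, Matrix.trace_fin_three]
  have hD1 := (((hmD 0 0).add (hmD 1 1)).add (hmD 2 2)).neg
  have hfd1 := hEq1.fderiv_eq.trans hD1.fderiv
  have hval1 : ∀ w : E3, fderiv ℝ σ1 0 w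
      = -(N w 0 0 + N w 1 1 + N w 2 2) := by
    intro w
    rw [hfd1]
    simp [hmDval]
  -- entry-level versions of the trace conditions
  have htr0e : M0 0 0 + M0 1 1 + M0 2 2 = 0 := by
    simpa [Matrix.trace_fin_three] using htr0
  have htr20e : M0 0 0 * M0 0 0 + M0 0 1 * M0 1 0 + M0 0 2 * M0 2 0
      + (M0 1 0 * M0 0 1 + M0 1 1 * M0 1 1 + M0 1 2 * M0 2 1)
      + (M0 2 0 * M0 0 2 + M0 2 1 * M0 1 2 + M0 2 2 * M0 2 2) = 0 := by
    have h := htr20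
    simp [Matrix.trace_fin_three, Matrix.mul_apply, Fin.sum_univ_three] at h
    linarith
  -- derivative of σ2
  have hEq2 : σ2 =ᶠ[nhds 0] (fun p =>
      ((opMatrix L p 0 0 + opMatrix L p 1 1 + opMatrix L p 2 2)
        * (opMatrix L p 0 0 + opMatrix L p 1 1 + opMatrix L p 2 2)
        - (opMatrix L p 0 0 * opMatrix L p 0 0 + opMatrix L p 0 1 * opMatrix L p 1 0 + opMatrix L p 0 2 * opMatrix L p 2 0 + opMatrix L p 1 0 * opMatrix L p 0 1 + opMatrix L p 1 1 * opMatrix L p 1 1 + opMatrix L p 1 2 * opMatrix L p 2 1 + opMatrix L p 2 0 * opMatrix L p 0 2 + opMatrix L p 2 1 * opMatrix L p 1 2 + opMatrix L p 2 2 * opMatrix L p 2 2)) * (1/2)) := by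
    filter_upwards [hUn] with p hp
    rw [hs2 p hp]
    simp [Matrix.trace_fin_three, Matrix.mul_apply, Fin.sum_univ_three]
    ring
  have hD2 := (((((hmD 0 0).add (hmD 1 1)).add (hmD 2 2)).mul
      (((hmD 0 0).add (hmD 1 1)).add (hmD 2 2))).sub ((((((((((hmD 0 0).mul (hmD 0 0)).add ((hmD 0 1).mul (hmD 1 0))).add ((hmD 0 2).mul (hmD 2 0))).add ((hmD 1 0).mul (hmD 0 1))).add ((hmD 1 1).mul (hmD 1 1))).add ((hmD 1 2).mul (hmD 2 1))).add ((hmD 2 0).mul (hmD 0 2))).add ((hmD 2 1).mul (hmD 1 2))).add ((hmD 2 2).mul (hmD 2 2)))).mul_const ((1:ℝ)/2)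
  have hfd2 := hEq2.fderiv_eq.trans hD2.fderiv
  have hval2 : ∀ w : E3, fderiv ℝ σ2 0 w = -(M0 * N w).trace := by
    intro w
    rw [hfd2]
    simp only [ContinuousLinearMap.add_apply, ContinuousLinearMap.sub_apply,
      ContinuousLinearMap.smul_apply, ContinuousLinearMap.coe_smul', Pi.smul_apply,
      hmDval, smul_eq_mul, Pi.add_apply, Pi.sub_apply, Pi.mul_apply, Pi.neg_apply,
      Matrix.trace_fin_three, Matrix.mul_apply, Fin.sum_univ_three, ← hM0]
    linear_combination (N w 0 0 + N w 1 1 + N w 2 2) * htr0e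
  -- derivative of σ3
  have hEq3 : σ3 =ᶠ[nhds 0] (fun p => -(opMatrix L p 0 0 * (opMatrix L p 1 1 * opMatrix L p 2 2) - opMatrix L p 0 0 * (opMatrix L p 1 2 * opMatrix L p 2 1) - opMatrix L p 0 1 * (opMatrix L p 1 0 * opMatrix L p 2 2) + opMatrix L p 0 1 * (opMatrix L p 1 2 * opMatrix L p 2 0) + opMatrix L p 0 2 * (opMatrix L p 1 0 * opMatrix L p 2 1) - opMatrix L p 0 2 * (opMatrix L p 1 1 * opMatrix L p 2 0))) := by
    filter_upwards [hUn] with p hp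
    rw [hs3 p hp]
    simp [Matrix.det_fin_three]
    ring
  have hD3 := ((((((((hmD 0 0).mul ((hmD 1 1).mul (hmD 2 2))).sub ((hmD 0 0).mul ((hmD 1 2).mul (hmD 2 1)))).sub ((hmD 0 1).mul ((hmD 1 0).mul (hmD 2 2)))).add ((hmD 0 1).mul ((hmD 1 2).mul (hmD 2 0)))).add ((hmD 0 2).mul ((hmD 1 0).mul (hmD 2 1)))).sub ((hmD 0 2).mul ((hmD 1 1).mul (hmD 2 0))))).neg
  have hfd3 := hEq3.fderiv_eq.trans hD3.fderiv
  have hval3 : ∀ w : E3, fderiv ℝ σ3 0 w = -(M0 * M0 * N w).trace := by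
    intro w
    rw [hfd3]
    simp only [ContinuousLinearMap.add_apply, ContinuousLinearMap.sub_apply,
      ContinuousLinearMap.neg_apply, ContinuousLinearMap.smul_apply,
      ContinuousLinearMap.coe_smul', Pi.smul_apply, hmDval, smul_eq_mul,
      Pi.add_apply, Pi.sub_apply, Pi.mul_apply, Pi.neg_apply,
      Matrix.trace_fin_three, Matrix.mul_apply, Fin.sum_univ_three, ← hM0]
    linear_combination
      ((M0 0 0 * N w 0 0 + M0 0 1 * N w 1 0 + M0 0 2 * N w 2 0
        + M0 1 0 * N w 0 1 + M0 1 1 * N w 1 1 + M0 1 2 * N w 2 1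
        + M0 2 0 * N w 0 2 + M0 2 1 * N w 1 2 + M0 2 2 * N w 2 2)
        - (M0 0 0 + M0 1 1 + M0 2 2) / 2 * (N w 0 0 + N w 1 1 + N w 2 2)) * htr0e
      + (N w 0 0 + N w 1 1 + N w 2 2) / 2 * htr20e
  -- covector relations from the Nijenhuis identity
  have hR1p : ∀ u : E3, fderiv ℝ σ1 0 (L 0 u) = fderiv ℝ σ2 0 u := by
    intro u
    rw [hval1 (L 0 u), hval2 u, ← Matrix.trace_fin_three]
    have h := hTrId 1 (by rw [Matrix.one_mul, Matrix.mul_one]) u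
    rw [Matrix.one_mul, Matrix.one_mul] at h
    rw [h]
  have hR2p : ∀ u : E3, fderiv ℝ σ2 0 (L 0 u) = fderiv ℝ σ3 0 u := by
    intro u
    rw [hval2 (L 0 u), hval3 u]
    have h := hTrId M0 rfl u
    rw [h, Matrix.mul_assoc]
  have hR3p : ∀ u : E3, fderiv ℝ σ3 0 (L 0 u) = 0 := by
    intro u
    rw [hval3 (L 0 u)]
    have h := hTrId (M0 * M0) (by rw [Matrix.mul_assoc]) u
    rw [h, ← Matrix.mul_assoc, hM03, Matrix.zero_mul, Matrix.trace_zero, neg_zero]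
  -- linear independence of the three differentials at 0
  have hpair := hInd 0 hU0
  have hli3 : LinearIndependent ℝ
      ![((fderiv ℝ σ1 0 : E3 →L[ℝ] ℝ) : E3 →ₗ[ℝ] ℝ),
        ((fderiv ℝ σ2 0 : E3 →L[ℝ] ℝ) : E3 →ₗ[ℝ] ℝ),
        ((fderiv ℝ σ3 0 : E3 →L[ℝ] ℝ) : E3 →ₗ[ℝ] ℝ)] := by
    rw [Fintype.linearIndependent_iff]
    intro g hg
    have hgu : ∀ u : E3,
        g 0 * fderiv ℝ σ1 0 u + g 1 * fderiv ℝ σ2 0 u + g 2 * fderiv ℝ σ3 0 u = 0 := by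
      intro u
      have h := LinearMap.congr_fun hg u
      simpa [Fin.sum_univ_three, smul_eq_mul] using h
    have hA : ∀ u : E3, g 0 * fderiv ℝ σ2 0 u + g 1 * fderiv ℝ σ3 0 u = 0 := by
      intro u
      have h := hgu (L 0 u)
      rw [hR1p u, hR2p u, hR3p u] at h
      linarith
    have hg01 : g 0 = 0 ∧ g 1 = 0 := by
      have h := Fintype.linearIndependent_iff.mp hpair ![g 0, g 1] ?_
      · exact ⟨h 0, h 1⟩
      · ext u
        simpa [Fin.sum_univ_two, smul_eq_mul] using hA u
    have hf3ne : (fderiv ℝ σ3 0 : E3 →L[ℝ] ℝ) ≠ 0 := by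
      have := hpair.ne_zero 1
      simpa using this
    have hg2 : g 2 = 0 := by
      by_contra hg2
      apply hf3ne
      ext u
      have h := hgu u
      rw [hg01.1, hg01.2] at h
      simp only [zero_mul, zero_add, ContinuousLinearMap.zero_apply] at h ⊢
      have := mul_eq_zero.mp h
      tauto
    intro i
    fin_cases i
    · exact hg01.1
    · exact hg01.2
    · exact hg2
  -- common kernel of the three differentials is trivial
  have hker : ∀ v : E3, fderiv ℝ σ1 0 v = 0 → fderiv ℝ σ2 0 v = 0 →
      fderiv ℝ σ3 0 v = 0 → v = 0 := by
    intro v h1 h2 h3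
    have hfr : Fintype.card (Fin 3) = Module.finrank ℝ (Module.Dual ℝ E3) := by
      rw [Subspace.dual_finrank_eq]
      simp
    set b := basisOfLinearIndependentOfCardEqFinrank hli3 hfr with hb
    rw [← Module.forall_dual_apply_eq_zero_iff ℝ v]
    intro φ
    have hrepr := b.sum_repr φ
    have hcoe := coe_basisOfLinearIndependentOfCardEqFinrank hli3 hfr
    rw [← hrepr]
    rw [LinearMap.sum_apply]
    rw [Fin.sum_univ_three]
    have hb0 : b 0 = (fderiv ℝ σ1 0 : E3 →ₗ[ℝ] ℝ) := by rw [← hb] at hcoe; rw [congrFun hcoe 0]; rfl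
    have hb1 : b 1 = (fderiv ℝ σ2 0 : E3 →ₗ[ℝ] ℝ) := by rw [← hb] at hcoe; rw [congrFun hcoe 1]; rfl
    have hb2 : b 2 = (fderiv ℝ σ3 0 : E3 →ₗ[ℝ] ℝ) := by rw [← hb] at hcoe; rw [congrFun hcoe 2]; rfl
    rw [hb0, hb1, hb2]
    simp [h1, h2, h3]
  -- smoothness of the coefficients at 0
  have hmCD : ∀ i j : Fin 3, ContDiffAt ℝ (⊤ : ℕ∞) (fun p => opMatrix L p i j) 0 := by
    intro i j
    have h := (((ContinuousLinearMap.proj (R := ℝ) (φ := fun _ : Fin 3 => ℝ) i).comp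
        (ContinuousLinearMap.apply ℝ E3 (e j)))).contDiff.comp_contDiffAt (0 : E3) hLat
    exact h.congr_of_eventuallyEq (Filter.Eventually.of_forall fun p => hmapply p i j)
  have hCD1 : ContDiffAt ℝ (⊤ : ℕ∞) σ1 0 := by
    have h : ContDiffAt ℝ (⊤ : ℕ∞) (fun p =>
        -(opMatrix L p 0 0 + opMatrix L p 1 1 + opMatrix L p 2 2)) 0 :=
      (((hmCD 0 0).add (hmCD 1 1)).add (hmCD 2 2)).neg
    exact h.congr_of_eventuallyEq hEq1
  have hCD2 : ContDiffAt ℝ (⊤ : ℕ∞) σ2 0 := by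
    have hA := ((hmCD 0 0).add (hmCD 1 1)).add (hmCD 2 2)
    have h := ((hA.mul hA).sub ((((((((((hmCD 0 0).mul (hmCD 0 0)).add ((hmCD 0 1).mul (hmCD 1 0))).add ((hmCD 0 2).mul (hmCD 2 0))).add ((hmCD 1 0).mul (hmCD 0 1))).add ((hmCD 1 1).mul (hmCD 1 1))).add ((hmCD 1 2).mul (hmCD 2 1))).add ((hmCD 2 0).mul (hmCD 0 2))).add ((hmCD 2 1).mul (hmCD 1 2))).add ((hmCD 2 2).mul (hmCD 2 2)))).mul (contDiffAt_const (c := (1:ℝ)/2))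
    exact ContDiffAt.congr_of_eventuallyEq h hEq2
  have hCD3 : ContDiffAt ℝ (⊤ : ℕ∞) σ3 0 := by
    have h := ((((((((hmCD 0 0).mul ((hmCD 1 1).mul (hmCD 2 2))).sub ((hmCD 0 0).mul ((hmCD 1 2).mul (hmCD 2 1)))).sub ((hmCD 0 1).mul ((hmCD 1 0).mul (hmCD 2 2)))).add ((hmCD 0 1).mul ((hmCD 1 2).mul (hmCD 2 0)))).add ((hmCD 0 2).mul ((hmCD 1 0).mul (hmCD 2 1)))).sub ((hmCD 0 2).mul ((hmCD 1 1).mul (hmCD 2 0))))).neg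
    exact ContDiffAt.congr_of_eventuallyEq h hEq3
  -- the map F = (σ1, σ2, σ3) and its derivative
  set F : E3 → E3 := fun p => ![σ1 p, σ2 p, σ3 p] with hFdef
  have hCDF : ContDiffAt ℝ (⊤ : ℕ∞) F 0 := by
    rw [contDiffAt_pi]
    intro i
    fin_cases i
    · simpa [hFdef] using hCD1
    · simpa [hFdef] using hCD2
    · simpa [hFdef] using hCD3
  set f' : E3 →L[ℝ] E3 :=
    ContinuousLinearMap.pi ![fderiv ℝ σ1 0, fderiv ℝ σ2 0, fderiv ℝ σ3 0] with hf'def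
  have hFd : HasFDerivAt F f' 0 := by
    rw [hf'def, hasFDerivAt_pi]
    intro i
    fin_cases i
    · simpa using (hCD1.differentiableAt (by simp)).hasFDerivAt
    · simpa using (hCD2.differentiableAt (by simp)).hasFDerivAt
    · simpa using (hCD3.differentiableAt (by simp)).hasFDerivAt
  -- f' is invertible
  have hker' : ∀ v : E3, f' v = 0 → v = 0 := by
    intro v hv
    refine hker v ?_ ?_ ?_
    · have := congrFun hv 0
      simpa [hf'def] using this
    · have := congrFun hv 1
      simpa [hf'def] using this
    · have := congrFun hv 2
      simpa [hf'def] using this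
  have hinj : Function.Injective (f' : E3 →ₗ[ℝ] E3) := by
    intro a b hab
    have h : f' (a - b) = 0 := by
      have hab' : f' a = f' b := hab
      rw [map_sub, hab', sub_self]
    exact sub_eq_zero.mp (hker' _ h)
  have hsurj := LinearMap.injective_iff_surjective.mp hinj
  set eL := (LinearEquiv.ofBijective (f' : E3 →ₗ[ℝ] E3)
    ⟨hinj, hsurj⟩).toContinuousLinearEquiv with heL
  have hcoe : (eL : E3 →L[ℝ] E3) = f' := by
    ext v
    rfl
  have hFd' : HasFDerivAt F (eL : E3 →L[ℝ] E3) 0 := by rw [hcoe]; exact hFd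
  -- local inverse
  have hn1 : ((⊤ : ℕ∞) : WithTop ℕ∞) ≠ 0 := by simp
  set G := hCDF.localInverse hFd' hn1 with hGdef
  have hG0 : G (F 0) = 0 := hCDF.localInverse_apply_image hFd' hn1
  have hGC : ContDiffAt ℝ (⊤ : ℕ∞) G (F 0) := hCDF.to_localInverse hFd' hn1
  have hGright : ∀ᶠ y in nhds (F 0), F (G y) = y :=
    (hCDF.hasStrictFDerivAt' hFd' hn1).eventually_right_inverse
  -- the curve
  set γ : ℝ → E3 := fun t => G (F 0 + t • e 0) with hγdef
  have haff : ContDiffAt ℝ (⊤ : ℕ∞) (fun t : ℝ => F 0 + t • e 0) 0 :=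
    (contDiff_const.add (contDiff_id.smul contDiff_const)).contDiffAt
  have hγ0 : γ 0 = 0 := by
    rw [hγdef]
    simpa using hG0
  have hGC' : ContDiffAt ℝ (⊤ : ℕ∞) G (F 0 + (0:ℝ) • e 0) := by simpa using hGC
  have hγC : ContDiffAt ℝ (⊤ : ℕ∞) γ 0 := ContDiffAt.comp 0 hGC' haff
  have htend : Filter.Tendsto (fun t : ℝ => F 0 + t • e 0) (nhds 0) (nhds (F 0)) := by
    have h := haff.continuousAt.tendsto
    simpa using h
  have hFγ : ∀ᶠ t in nhds (0:ℝ), F (γ t) = F 0 + t • e 0 := htend.eventually hGright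
  have hUγ : ∀ᶠ t in nhds (0:ℝ), γ t ∈ U := by
    have hc : ContinuousAt γ 0 := hγC.continuousAt
    have hmem : U ∈ nhds (γ 0) := by rw [hγ0]; exact hUn
    exact hc.preimage_mem_nhds hmem
  have hmCDO : ∀ i j : Fin 3, ContDiffOn ℝ (⊤ : ℕ∞) (fun p => opMatrix L p i j) U := by
    intro i j
    have h := (((ContinuousLinearMap.proj (R := ℝ) (φ := fun _ : Fin 3 => ℝ) i).comp
        (ContinuousLinearMap.apply ℝ E3 (e j)))).contDiff.comp_contDiffOn hL
    exact h.congr (fun p _ => hmapply p i j)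
  have hσ1U : ContDiffOn ℝ (⊤ : ℕ∞) σ1 U := by
    have h : ContDiffOn ℝ (⊤ : ℕ∞) (fun p =>
        -(opMatrix L p 0 0 + opMatrix L p 1 1 + opMatrix L p 2 2)) U :=
      (((hmCDO 0 0).add (hmCDO 1 1)).add (hmCDO 2 2)).neg
    refine h.congr (fun p hp => ?_)
    rw [hs1 p hp, Matrix.trace_fin_three]
  have hσ2U : ContDiffOn ℝ (⊤ : ℕ∞) σ2 U := by
    have hA := ((hmCDO 0 0).add (hmCDO 1 1)).add (hmCDO 2 2)
    have h := ((hA.mul hA).sub ((((((((((hmCDO 0 0).mul (hmCDO 0 0)).add ((hmCDO 0 1).mul (hmCDO 1 0))).add ((hmCDO 0 2).mul (hmCDO 2 0))).add ((hmCDO 1 0).mul (hmCDO 0 1))).add ((hmCDO 1 1).mul (hmCDO 1 1))).add ((hmCDO 1 2).mul (hmCDO 2 1))).add ((hmCDO 2 0).mul (hmCDO 0 2))).add ((hmCDO 2 1).mul (hmCDO 1 2))).add ((hmCDO 2 2).mul (hmCDO 2 2)))).mul (contDiffOn_const (c := (1:ℝ)/2))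
    refine h.congr (fun p hp => ?_)
    rw [hs2 p hp]
    simp [Matrix.trace_fin_three, Matrix.mul_apply, Fin.sum_univ_three]
    ring
  have hσ3U : ContDiffOn ℝ (⊤ : ℕ∞) σ3 U := by
    have h := ((((((((hmCDO 0 0).mul ((hmCDO 1 1).mul (hmCDO 2 2))).sub ((hmCDO 0 0).mul ((hmCDO 1 2).mul (hmCDO 2 1)))).sub ((hmCDO 0 1).mul ((hmCDO 1 0).mul (hmCDO 2 2)))).add ((hmCDO 0 1).mul ((hmCDO 1 2).mul (hmCDO 2 0)))).add ((hmCDO 0 2).mul ((hmCDO 1 0).mul (hmCDO 2 1)))).sub ((hmCDO 0 2).mul ((hmCDO 1 1).mul (hmCDO 2 0))))).neg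
    refine h.congr (fun p hp => ?_)
    rw [hs3 p hp]
    simp [Matrix.det_fin_three]
    ring
  have hFU : ContDiffOn ℝ (⊤ : ℕ∞) F U := by
    rw [contDiffOn_pi]
    intro i
    fin_cases i
    · simpa [hFdef] using hσ1U
    · simpa [hFdef] using hσ2U
    · simpa [hFdef] using hσ3U
  have hFUat : ∀ p ∈ U, ContDiffAt ℝ (⊤ : ℕ∞) F p := fun p hp => hFU.contDiffAt (hU.mem_nhds hp)
  have hfdc : ContinuousAt (fderiv ℝ F) 0 :=
    (hFU.continuousOn_fderiv_of_isOpen hU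
      (by exact_mod_cast (le_top : (1 : ℕ∞) ≤ ⊤))).continuousAt hUn
  have hfd0 : fderiv ℝ F 0 = (eL : E3 →L[ℝ] E3) := hFd'.fderiv
  have hinvN : fderiv ℝ F ⁻¹' range ((↑) : (E3 ≃L[ℝ] E3) → E3 →L[ℝ] E3) ∈ nhds (0:E3) :=
    hfdc.preimage_mem_nhds (by rw [hfd0]; exact ContinuousLinearEquiv.isOpen.mem_nhds ⟨eL, rfl⟩)
  have hGev : ∀ᶠ y in nhds (F 0), G y ∈ U ∧
      fderiv ℝ F (G y) ∈ range ((↑) : (E3 ≃L[ℝ] E3) → E3 →L[ℝ] E3) := by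
    have h2 : ∀ᶠ p in nhds (G (F 0)), p ∈ U ∧
        fderiv ℝ F p ∈ range ((↑) : (E3 ≃L[ℝ] E3) → E3 →L[ℝ] E3) := by
      rw [hG0]; exact Filter.Eventually.and hUn hinvN
    exact hGC.continuousAt.tendsto.eventually h2
  have hGsm : ∀ᶠ y in nhds (F 0), ContDiffAt ℝ (⊤ : ℕ∞) G y := by
    filter_upwards [hGev, (hCDF.toOpenPartialHomeomorph F hFd' hn1).open_target.mem_nhds
      (hCDF.image_mem_toOpenPartialHomeomorph_target hFd' hn1)] with y hy hyt
    obtain ⟨hyU, ⟨f0, hf0⟩⟩ := hy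
    have hd : HasFDerivAt F (f0 : E3 →L[ℝ] E3) (G y) := by
      rw [hf0]; exact ((hFUat _ hyU).differentiableAt (by simp)).hasFDerivAt
    exact (hCDF.toOpenPartialHomeomorph F hFd' hn1).contDiffAt_symm hyt hd (hFUat _ hyU)
  have hγev : ∀ᶠ t in nhds (0:ℝ), ContDiffAt ℝ (⊤ : ℕ∞) γ t := by
    filter_upwards [htend.eventually hGsm] with t ht
    exact ContDiffAt.comp t ht (contDiff_const.add (contDiff_id.smul contDiff_const)).contDiffAt
  obtain ⟨s, hs, hγCOn⟩ : ∃ s ∈ nhds (0:ℝ), ContDiffOn ℝ (⊤ : ℕ∞) γ s :=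
    ⟨{t | ContDiffAt ℝ (⊤ : ℕ∞) γ t}, hγev, fun t ht => ContDiffAt.contDiffWithinAt ht⟩
  have hAll : {t : ℝ | F (γ t) = F 0 + t • e 0 ∧ γ t ∈ U} ∩ s ∈ nhds (0:ℝ) :=
    Filter.inter_mem (hFγ.and hUγ) hs
  obtain ⟨δ, hδpos, hball⟩ := Metric.mem_nhds_iff.mp hAll
  have hIoo : Ioo (-δ) δ ⊆ {t : ℝ | F (γ t) = F 0 + t • e 0 ∧ γ t ∈ U} ∩ s := by
    intro t ht
    apply hball
    rw [Real.ball_eq_Ioo]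
    constructor
    · simpa using ht.1
    · simpa using ht.2
  have hFcoord : ∀ t ∈ Ioo (-δ) δ,
      σ1 (γ t) = t ∧ σ2 (γ t) = 0 ∧ σ3 (γ t) = 0 := by
    intro t ht
    have h := (hIoo ht).1.1
    refine ⟨?_, ?_, ?_⟩
    · have h0 := congrFun h 0
      simpa [hFdef, he, hσ10] using h0
    · have h1 := congrFun h 1
      simpa [hFdef, he, hσ20] using h1
    · have h2 := congrFun h 2
      simpa [hFdef, he, hσ30] using h2
  have hσ1γ : (fun t => σ1 (γ t)) =ᶠ[nhds (0:ℝ)] (fun t => t) := by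
    filter_upwards [hFγ] with t ht
    have h0 := congrFun ht 0
    simpa [hFdef, he, hσ10] using h0
  have hdγ : HasDerivAt γ (deriv γ 0) 0 := (hγC.differentiableAt (by simp)).hasDerivAt
  have hfσ1 : HasFDerivAt σ1 (fderiv ℝ σ1 0) (γ 0) := by
    rw [hγ0]
    exact (hCD1.differentiableAt (by simp)).hasFDerivAt
  have hc1 : HasDerivAt (fun t => σ1 (γ t)) (fderiv ℝ σ1 0 (deriv γ 0)) 0 :=
    hfσ1.comp_hasDerivAt 0 hdγ
  have hd1eq : fderiv ℝ σ1 0 (deriv γ 0) = 1 := by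
    rw [← hc1.deriv, hσ1γ.deriv_eq]
    exact deriv_id 0
  have hne : deriv γ 0 ≠ 0 := by
    intro h
    rw [h] at hd1eq
    simp at hd1eq
  obtain ⟨hM1, -⟩ := hMorse δ hδpos γ (hγCOn.mono fun t ht => (hIoo ht).2) hγ0 hne
    (fun t ht => ⟨(hIoo ht).1.2, (hFcoord t ht).2.1, (hFcoord t ht).2.2⟩)
  have hfin : deriv (σ1 ∘ γ) 0 = 1 := by
    rw [show (σ1 ∘ γ) = (fun t => σ1 (γ t)) from rfl, hσ1γ.deriv_eq]
    exact deriv_id 0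
  rw [hM1] at hfin
  exact zero_ne_one hfin
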